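/- Let v ∈ ℂ and let n₁, n₂ be odd integers. Write θ(w) := θ[0;0](i, w) for the genus-one theta function with zero characteristic at the period τ = i. Then θ((n₁ − n₂ i)v) − e^{2πi n₁ n₂ v²} θ((n₁ + n₂ i)v) + e^{−π(n₁² − n₂²)v²} ( θ((n₂ − n₁ i)v) − e^{2πi n₁ n₂ v²} θ((n₂ + n₁ i)v) ) = 0. -/

import Mathlib

open Complex

/-- The genus-one theta function with characteristic `[ε; δ]`. -/
noncomputable def theta1 (ε δ : ℤ) (τ z : ℂ) : ℂ :=
  ∑' n : ℤ,
    Complex.exp (↑Real.pi * I * ((n : ℂ) + (ε : ℂ)/2)^2 * τ +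
      2 * ↑Real.pi * I * ((n : ℂ) + (ε : ℂ)/2) * (z + (δ : ℂ)/2))

open Real

/-!
At the fixed point `τ = i` of `τ ↦ -1/τ` the modular transformation of Jacobi's theta function
reads `θ(z) = e^{-π z²} θ(i z)`. Applied to `z = (a - b i) v`, for which `i z = (b + a i) v`,
it expresses `θ((n₁ - n₂ i) v)` through `θ((n₂ + n₁ i) v)` and `θ((n₂ - n₁ i) v)` through
`θ((n₁ + n₂ i) v)`; the two exponential factors cancel against those in the identity.
-/

lemma theta1_zero_zero_eq_jacobiTheta₂ (τ z : ℂ) : theta1 0 0 τ z = jacobiTheta₂ z τ := by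
  refine tsum_congr fun n => ?_
  rw [jacobiTheta₂_term]
  congr 1
  push_cast
  ring

lemma jacobiTheta₂_I (z : ℂ) :
    jacobiTheta₂ z I = cexp (-(π : ℂ) * z ^ 2) * jacobiTheta₂ (I * z) I := by
  have hτ : -1 / I = I := by rw [div_I, neg_mul, one_mul, neg_neg]
  have hz : z / I = -(I * z) := by rw [div_I, mul_comm]
  have hexp : -(π : ℂ) * I * z ^ 2 / I = -π * z ^ 2 := by field_simp
  rw [jacobiTheta₂_functional_equation, neg_mul, I_mul_I, neg_neg, hτ, hz, hexp,
    jacobiTheta₂_neg_left, one_cpow, one_div_one, one_mul]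

lemma jacobiTheta₂_sub_mul_I_mul (a b v : ℂ) :
    jacobiTheta₂ ((a - b * I) * v) I =
      cexp (-(π : ℂ) * (a ^ 2 - b ^ 2) * v ^ 2) * cexp (2 * (π : ℂ) * I * a * b * v ^ 2) *
        jacobiTheta₂ ((b + a * I) * v) I := by
  rw [jacobiTheta₂_I, ← Complex.exp_add]
  congr 2
  · linear_combination (-(π : ℂ) * b ^ 2 * v ^ 2) * I_sq
  · linear_combination (-b * v) * I_sq

theorem stmt_19_general (v : ℂ) (n₁ n₂ : ℤ) :
    theta1 0 0 I (((n₁ : ℂ) - (n₂ : ℂ) * I) * v) -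
        Complex.exp (2 * ↑Real.pi * I * (n₁ : ℂ) * (n₂ : ℂ) * v ^ 2) *
          theta1 0 0 I (((n₁ : ℂ) + (n₂ : ℂ) * I) * v) +
      Complex.exp (-(↑Real.pi) * ((n₁ : ℂ) ^ 2 - (n₂ : ℂ) ^ 2) * v ^ 2) *
        (theta1 0 0 I (((n₂ : ℂ) - (n₁ : ℂ) * I) * v) -
          Complex.exp (2 * ↑Real.pi * I * (n₁ : ℂ) * (n₂ : ℂ) * v ^ 2) *
            theta1 0 0 I (((n₂ : ℂ) + (n₁ : ℂ) * I) * v)) = 0 := by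
  simp only [theta1_zero_zero_eq_jacobiTheta₂]
  rw [jacobiTheta₂_sub_mul_I_mul, jacobiTheta₂_sub_mul_I_mul (n₂ : ℂ),
    show 2 * (π : ℂ) * I * n₂ * n₁ = 2 * (π : ℂ) * I * n₁ * n₂ by ring]
  have hcancel : cexp (-(π : ℂ) * ((n₁ : ℂ) ^ 2 - n₂ ^ 2) * v ^ 2) *
      cexp (-π * ((n₂ : ℂ) ^ 2 - n₁ ^ 2) * v ^ 2) = 1 := by
    rw [← Complex.exp_add, ← Complex.exp_zero]
    ring_nf
  linear_combination cexp (2 * (π : ℂ) * I * n₁ * n₂ * v ^ 2) *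
    jacobiTheta₂ ((n₁ + n₂ * I) * v) I * hcancel

/-- The four-term identity for `θ := θ[0;0](i, ·)` and odd integers `n₁, n₂`. -/
theorem stmt_19 (v : ℂ) (n₁ n₂ : ℤ) (h₁ : Odd n₁) (h₂ : Odd n₂) :
    theta1 0 0 I (((n₁ : ℂ) - (n₂ : ℂ) * I) * v) -
        Complex.exp (2 * ↑Real.pi * I * (n₁ : ℂ) * (n₂ : ℂ) * v ^ 2) *
          theta1 0 0 I (((n₁ : ℂ) + (n₂ : ℂ) * I) * v) +
      Complex.exp (-(↑Real.pi) * ((n₁ : ℂ) ^ 2 - (n₂ : ℂ) ^ 2) * v ^ 2) *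
        (theta1 0 0 I (((n₂ : ℂ) - (n₁ : ℂ) * I) * v) -
          Complex.exp (2 * ↑Real.pi * I * (n₁ : ℂ) * (n₂ : ℂ) * v ^ 2) *
            theta1 0 0 I (((n₂ : ℂ) + (n₁ : ℂ) * I) * v)) = 0 :=
  stmt_19_general v n₁ n₂
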